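/- arXiv:math/9809001 — 3 statements merged into one kernel-verified Lean document; each statement's English description precedes it below -/
import Mathlib

section
/- Let 𝕜 be ℝ or ℂ, let U, V, W be finite-dimensional inner product spaces over 𝕜 with dim U ≤ dim V, and let M : U →ₗ[𝕜] W and N : V →ₗ[𝕜] W be linear maps. If for every linear map P : V →ₗ[𝕜] U the Frobenius inner product of M ∘ P and N vanishes, i.e. ∑ᵢ ⟪M (P (vᵢ)), N (vᵢ)⟫ = 0 for an orthonormal basis (vᵢ) of V, then ⟪M u, N v⟫ = 0 for all u ∈ U and v ∈ V (the ranges of M and N are orthogonal subspaces of W); in particular, rank M + rank N ≤ dim W. -/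
/-!
Testing the hypothesis against the rank-one map `P = ⟪w, ·⟫ • u` collapses the Frobenius
pairing of `M ∘ P` and `N`, after expanding `w` in the orthonormal basis, to `⟪M u, N w⟫`.
-/

open Module

section

variable {𝕜 : Type*} [RCLike 𝕜] {E : Type*} [NormedAddCommGroup E] [InnerProductSpace 𝕜 E]

local notation "⟪" x ", " y "⟫" => inner 𝕜 x y

theorem OrthonormalBasis.sum_inner_mul_apply {ι : Type*} [Fintype ι]
    (v : OrthonormalBasis ι 𝕜 E) (f : E →ₗ[𝕜] 𝕜) (w : E) :
    ∑ i, ⟪v i, w⟫ * f (v i) = f w := by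
  conv_rhs => rw [← v.sum_repr' w]
  simp only [map_sum, map_smul, smul_eq_mul]

theorem OrthonormalBasis.sum_inner_comp_smulRight_innerₛₗ {ι : Type*} [Fintype ι]
    {U F : Type*} [AddCommGroup U] [Module 𝕜 U]
    [NormedAddCommGroup F] [InnerProductSpace 𝕜 F]
    (v : OrthonormalBasis ι 𝕜 E) (M : U →ₗ[𝕜] F) (N : E →ₗ[𝕜] F) (u : U) (w : E) :
    ∑ i, ⟪M ((innerₛₗ 𝕜 w).smulRight u (v i)), N (v i)⟫ = ⟪M u, N w⟫ := by
  simpa only [LinearMap.smulRight_apply, innerₛₗ_apply_apply, map_smul, inner_smul_left,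
    inner_conj_symm, LinearMap.comp_apply] using
    v.sum_inner_mul_apply ((innerₛₗ 𝕜 (M u)).comp N) w

theorem Submodule.IsOrtho.finrank_add_le [FiniteDimensional 𝕜 E] {K L : Submodule 𝕜 E}
    (h : K ⟂ L) : finrank 𝕜 K + finrank 𝕜 L ≤ finrank 𝕜 E := by
  calc finrank 𝕜 K + finrank 𝕜 L
      ≤ finrank 𝕜 K + finrank 𝕜 Kᗮ := Nat.add_le_add_left (Submodule.finrank_mono h.symm.le) _
    _ = finrank 𝕜 E := Submodule.finrank_add_finrank_orthogonal K

theorem LinearMap.isOrtho_range_of_inner_eq_zero {U V : Type*} [AddCommGroup U] [Module 𝕜 U]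
    [AddCommGroup V] [Module 𝕜 V] {M : U →ₗ[𝕜] E} {N : V →ₗ[𝕜] E}
    (h : ∀ u w, ⟪M u, N w⟫ = 0) : LinearMap.range M ⟂ LinearMap.range N := by
  rw [Submodule.isOrtho_iff_inner_eq]
  rintro _ ⟨u, rfl⟩ _ ⟨w, rfl⟩
  exact h u w

end

theorem orthogonal_ranges_of_frobenius_orthogonal_general
    {𝕜 : Type*} [RCLike 𝕜] {U V W : Type*}
    [NormedAddCommGroup U] [InnerProductSpace 𝕜 U]
    [NormedAddCommGroup V] [InnerProductSpace 𝕜 V]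
    [NormedAddCommGroup W] [InnerProductSpace 𝕜 W] [FiniteDimensional 𝕜 W]
    (M : U →ₗ[𝕜] W) (N : V →ₗ[𝕜] W)
    {ι : Type*} [Fintype ι] (v : OrthonormalBasis ι 𝕜 V)
    (h : ∀ P : V →ₗ[𝕜] U, ∑ i, (inner 𝕜 (M (P (v i))) (N (v i)) : 𝕜) = 0) :
    (∀ (u : U) (w : V), (inner 𝕜 (M u) (N w) : 𝕜) = 0) ∧
      finrank 𝕜 (LinearMap.range M) + finrank 𝕜 (LinearMap.range N)
        ≤ finrank 𝕜 W := by
  have horth : ∀ (u : U) (w : V), (inner 𝕜 (M u) (N w) : 𝕜) = 0 := fun u w => by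
    rw [← v.sum_inner_comp_smulRight_innerₛₗ M N u w]
    exact h _
  exact ⟨horth, (LinearMap.isOrtho_range_of_inner_eq_zero horth).finrank_add_le⟩

/-- **Lemma 2.4.** If `M : U →ₗ W` and `N : V →ₗ W` (with `dim U ≤ dim V`) satisfy
`⟨M ∘ P, N⟩ = 0` in the Frobenius inner product for every `P : V →ₗ U`, then the
ranges of `M` and `N` are orthogonal in `W`, and `rank M + rank N ≤ dim W`. -/
theorem orthogonal_ranges_of_frobenius_orthogonal
    {𝕜 : Type*} [RCLike 𝕜] {U V W : Type*}
    [NormedAddCommGroup U] [InnerProductSpace 𝕜 U] [FiniteDimensional 𝕜 U]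
    [NormedAddCommGroup V] [InnerProductSpace 𝕜 V] [FiniteDimensional 𝕜 V]
    [NormedAddCommGroup W] [InnerProductSpace 𝕜 W] [FiniteDimensional 𝕜 W]
    (hdim : finrank 𝕜 U ≤ finrank 𝕜 V)
    (M : U →ₗ[𝕜] W) (N : V →ₗ[𝕜] W)
    {ι : Type*} [Fintype ι] (v : OrthonormalBasis ι 𝕜 V)
    (h : ∀ P : V →ₗ[𝕜] U, ∑ i, (inner 𝕜 (M (P (v i))) (N (v i)) : 𝕜) = 0) :
    (∀ (u : U) (w : V), (inner 𝕜 (M u) (N w) : 𝕜) = 0) ∧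
      finrank 𝕜 (LinearMap.range M) + finrank 𝕜 (LinearMap.range N)
        ≤ finrank 𝕜 W :=
  orthogonal_ranges_of_frobenius_orthogonal_general M N v h
end

section
/- Let X be a compact Hausdorff topological space and μ a finite Borel measure on X with full support (every nonempty open set has positive measure). Let Φ : X → Matrix (Fin 2) (Fin 2) ℂ be continuous and suppose that the set {x ∈ X | Φ x ≠ 0} is dense in X. If η : X → ℂ is continuous and for every continuous map B : X → Matrix (Fin 2) (Fin 2) ℂ one has ∫_X Re( trace(adjugate (Φ x) * (B x)) · conj (η x) ) dμ(x) = 0, then η x = 0 for every x ∈ X. -/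
open MeasureTheory Matrix

/-- **Lemma 4.5 (bundle-trivialized).** Let `Φ : X → M₂(ℂ)` be continuous and nonzero
on a dense set, over a compact Hausdorff space with a fully supported finite Borel
measure.  If a continuous `η : X → ℂ` is real-`L²`-orthogonal to the image of the
differential `B ↦ trace(adjugate Φ ⬝ B)` of the determinant map at `Φ`, then `η ≡ 0`:
the determinant map vanishes transversely at `Φ`. -/
theorem eta_eq_zero_of_orthogonal_to_det_differential
    {X : Type*} [TopologicalSpace X] [CompactSpace X] [T2Space X]
    [MeasurableSpace X] [BorelSpace X]
    (μ : Measure X) [IsFiniteMeasure μ]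
    (hfull : ∀ U : Set X, IsOpen U → U.Nonempty → 0 < μ U)
    (Φ : X → Matrix (Fin 2) (Fin 2) ℂ) (hΦ : Continuous Φ)
    (hdense : Dense {x : X | Φ x ≠ 0})
    (η : X → ℂ) (hη : Continuous η)
    (h : ∀ B : X → Matrix (Fin 2) (Fin 2) ℂ, Continuous B →
      ∫ x, (Matrix.trace ((Φ x).adjugate * B x) * (starRingEnd ℂ) (η x)).re ∂μ = 0) :
    ∀ x : X, η x = 0 := by
  haveI : μ.IsOpenPosMeasure := ⟨fun U hU hne => (hfull U hU hne).ne'⟩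
  set B : X → Matrix (Fin 2) (Fin 2) ℂ := fun x => η x • ((Φ x).adjugate)ᴴ with hBdef
  have hBc : Continuous B := hη.smul (hΦ.matrix_adjugate.matrix_conjTranspose)
  set f : X → ℝ :=
    fun x => (Matrix.trace ((Φ x).adjugate * B x) * (starRingEnd ℂ) (η x)).re with hfdef
  have key : ∀ x, f x =
      Complex.normSq (η x) * ∑ i, ∑ j, Complex.normSq ((Φ x).adjugate i j) := by
    intro x
    set A := (Φ x).adjugate with hA
    have htr : Matrix.trace (A * B x) =
        η x * ((∑ i, ∑ j, Complex.normSq (A i j) : ℝ) : ℂ) := by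
      simp only [hBdef, Matrix.trace, Matrix.diag, Matrix.mul_apply, Matrix.smul_apply,
        Matrix.conjTranspose_apply, smul_eq_mul]
      push_cast
      rw [Finset.mul_sum]
      refine Finset.sum_congr rfl fun i _ => ?_
      rw [Finset.mul_sum]
      refine Finset.sum_congr rfl fun j _ => ?_
      have hmc : A i j * star (A i j) = (Complex.normSq (A i j) : ℂ) := Complex.mul_conj _
      linear_combination η x * hmc
    simp only [hfdef, ← hA, htr]
    rw [mul_comm (η x), mul_assoc, Complex.mul_conj, ← Complex.ofReal_mul,
      Complex.ofReal_re]
    ring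
  have hfc : Continuous f := by
    apply Complex.continuous_re.comp
    exact ((hΦ.matrix_adjugate.matrix_mul hBc).matrix_trace).mul
      (Complex.continuous_conj.comp hη)
  have hfnonneg : ∀ x, 0 ≤ f x := by
    intro x
    rw [key x]
    exact mul_nonneg (Complex.normSq_nonneg _)
      (Finset.sum_nonneg fun _ _ => Finset.sum_nonneg fun _ _ => Complex.normSq_nonneg _)
  have hint : Integrable f μ := by
    apply hfc.integrable_of_hasCompactSupport
    exact HasCompactSupport.of_compactSpace f
  have hae : f =ᵐ[μ] 0 :=
    (integral_eq_zero_iff_of_nonneg hfnonneg hint).mp (h B hBc)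
  have hzero : f = 0 := (hfc.ae_eq_iff_eq μ continuous_const).mp hae
  -- On the dense set where Φ x ≠ 0, the adjugate is nonzero, so η x = 0 there.
  have hsub : {x : X | Φ x ≠ 0} ⊆ {x : X | η x = 0} := by
    intro x hx
    have hAx : (Φ x).adjugate ≠ 0 := by
      intro hA0
      apply hx
      have := Matrix.adjugate_adjugate' (Φ x)
      rw [hA0, Matrix.adjugate_zero] at this
      simpa using this.symm
    have hfx : f x = 0 := by rw [hzero]; rfl
    rw [key x] at hfx
    have hsum : 0 < ∑ i, ∑ j, Complex.normSq ((Φ x).adjugate i j) := by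
      obtain ⟨i, j, hij⟩ : ∃ i j, (Φ x).adjugate i j ≠ 0 := by
        by_contra hc
        push_neg at hc
        exact hAx (by ext i j; exact hc i j)
      have hterm : 0 < Complex.normSq ((Φ x).adjugate i j) := by
        simpa [Complex.normSq_pos] using hij
      calc (0:ℝ) < Complex.normSq ((Φ x).adjugate i j) := hterm
        _ ≤ ∑ j', Complex.normSq ((Φ x).adjugate i j') :=
            Finset.single_le_sum (fun _ _ => Complex.normSq_nonneg _) (Finset.mem_univ j)
        _ ≤ _ := Finset.single_le_sum
            (fun i' _ => Finset.sum_nonneg fun j' _ => Complex.normSq_nonneg _)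
            (Finset.mem_univ i)
    have : Complex.normSq (η x) = 0 := by
      rcases mul_eq_zero.mp hfx with h1 | h1
      · exact h1
      · exact absurd h1 hsum.ne'
    simpa [Complex.normSq_eq_zero] using this
  -- η vanishes on a dense set and is continuous, hence vanishes everywhere.
  intro x
  have hclosed : IsClosed {x : X | η x = 0} := isClosed_eq hη continuous_const
  have : closure {x : X | Φ x ≠ 0} ⊆ {x : X | η x = 0} :=
    hclosed.closure_subset_iff.mpr hsub
  exact this (hdense x)
end

section
/- Let E and F be complex Hilbert spaces and let B, A : E →L[ℂ] F be continuous linear maps such that A vanishes on the orthogonal complement of ker B (i.e. A x = 0 for all x ∈ (ker B)ᗮ) and range A ⊆ range B. Then for every scalar t ∈ ℂ, range (B + t • A) = range B, and ker (B + t • A) is ℂ-linearly isomorphic to ker B; in particular, if ker B has finite dimension κ and F ⧸ range B has finite dimension, then every B + t • A has closed range with the same cokernel, kernel of dimension κ, and the same Fredholm index as B. -/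
/-!
Since `B` maps the complement `C = (ker B)ᗮ` isomorphically onto `range B ⊇ range A`, we can
write `A = B ∘ S` with `S` taking values in `C`; as `A` vanishes on `C`, so does `S`, hence
`S ∘ S = 0`. Then `1 + S` is invertible with inverse `1 - S`, and `B + A = B ∘ (1 + S)`, so
`B + A` has the range of `B` and a kernel isomorphic to that of `B`. A finite-codimensional
range is closed because, for a finite-dimensional complement `G`, the open mapping theorem makes
`(x, g) ↦ B x + g` an isomorphism `C × G ≃L F` carrying `C × 0` onto `range B`.
-/

open Module

namespace LinearMap

variable {R M N : Type*} [Ring R] [AddCommGroup M] [Module R M] [AddCommGroup N] [Module R N]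
  {B A : M →ₗ[R] N} {C : Submodule R M}

theorem range_comp_subtype_eq_of_isCompl_ker (hC : IsCompl (ker B) C) :
    range (B ∘ₗ C.subtype) = range B := by
  rw [range_comp, Submodule.range_subtype, ← Submodule.map_top]
  refine le_antisymm (Submodule.map_mono le_top) ?_
  rw [LinearMap.map_le_map_iff, sup_comm, hC.sup_eq_top]

theorem ker_comp_subtype_eq_bot_of_isCompl_ker (hC : IsCompl (ker B) C) :
    ker (B ∘ₗ C.subtype) = ⊥ := by
  rw [ker_comp, ← Submodule.disjoint_iff_comap_eq_bot]
  exact hC.disjoint.symm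

theorem exists_comp_eq_and_mul_self_eq_zero (hC : IsCompl (ker B) C) (hAB : range A ≤ range B)
    (hA0 : C ≤ ker A) : ∃ S : End R M, B ∘ₗ S = A ∧ S * S = 0 := by
  let e := LinearEquiv.ofInjective _ (ker_eq_bot.mp (ker_comp_subtype_eq_bot_of_isCompl_ker hC))
  let A' := A.codRestrict _ fun x ↦ (range_comp_subtype_eq_of_isCompl_ker hC).ge (hAB ⟨x, rfl⟩)
  let S : End R M := C.subtype ∘ₗ e.symm.toLinearMap ∘ₗ A'
  refine ⟨S, ext fun x ↦ congrArg Subtype.val (e.apply_symm_apply (A' x)), ext fun x ↦ ?_⟩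
  have hA'S : A' (S x) = 0 := Subtype.ext (hA0 (e.symm (A' x)).2)
  change C.subtype (e.symm (A' (S x))) = 0
  rw [hA'S, map_zero, map_zero]

theorem exists_linearEquiv_add_eq_comp (hC : IsCompl (ker B) C) (hAB : range A ≤ range B)
    (hA0 : C ≤ ker A) : ∃ U : M ≃ₗ[R] M, B + A = B ∘ₗ U.toLinearMap := by
  obtain ⟨S, hBS, hS⟩ := exists_comp_eq_and_mul_self_eq_zero hC hAB hA0
  have hinv : (1 + S) * (1 - S) = 1 ∧ (1 - S) * (1 + S) = 1 := by
    constructor <;> noncomm_ring <;> simp [hS]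
  refine ⟨.ofLinearMap (1 + S) (1 - S) hinv.1 hinv.2, ?_⟩
  change B + A = B ∘ₗ (1 + S)
  rw [comp_add, hBS, End.one_eq_id, comp_id]

theorem range_add_eq_of_isCompl_ker (hC : IsCompl (ker B) C) (hAB : range A ≤ range B)
    (hA0 : C ≤ ker A) : range (B + A) = range B := by
  obtain ⟨U, hU⟩ := exists_linearEquiv_add_eq_comp hC hAB hA0
  rw [hU, range_comp_of_range_eq_top _ U.range]

theorem nonempty_ker_add_equiv_of_isCompl_ker (hC : IsCompl (ker B) C) (hAB : range A ≤ range B)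
    (hA0 : C ≤ ker A) : Nonempty (ker (B + A) ≃ₗ[R] ker B) := by
  obtain ⟨U, hU⟩ := exists_linearEquiv_add_eq_comp hC hAB hA0
  rw [hU, ker_comp]
  exact ⟨U.ofSubmodules _ _ (Submodule.map_comap_eq_of_surjective U.surjective _)⟩

end LinearMap

theorem ContinuousLinearMap.isClosed_range_of_finiteDimensional_quotient {𝕜 E F : Type*}
    [RCLike 𝕜] [NormedAddCommGroup E] [InnerProductSpace 𝕜 E] [CompleteSpace E]
    [NormedAddCommGroup F] [NormedSpace 𝕜 F] [CompleteSpace F] (B : E →L[𝕜] F)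
    [FiniteDimensional 𝕜 (F ⧸ LinearMap.range (B : E →ₗ[𝕜] F))] :
    IsClosed (LinearMap.range (B : E →ₗ[𝕜] F) : Set F) := by
  set K := LinearMap.ker (B : E →ₗ[𝕜] F)
  have hK : IsCompl K Kᗮ := K.isCompl_orthogonal
  obtain ⟨G, hG⟩ := Submodule.exists_isCompl (LinearMap.range (B : E →ₗ[𝕜] F))
  have : FiniteDimensional 𝕜 G := (Submodule.quotientEquivOfIsCompl _ _ hG).finiteDimensional
  have := K.isClosed_orthogonal.completeSpace_coe
  rw [← LinearMap.range_comp_subtype_eq_of_isCompl_ker hK] at hG ⊢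
  exact (B.comp Kᗮ.subtypeL).closed_complemented_range_of_isCompl_of_ker_eq_bot G hG
    G.closed_of_finiteDimensional (LinearMap.ker_comp_subtype_eq_bot_of_isCompl_ker hK)

/-- **Claim in the proof of Lemma 4.7.** Let `B, A : E →L F` be bounded operators
between complex Hilbert spaces such that `A` vanishes on `(ker B)ᗮ` and
`range A ⊆ range B`.  Then for every `t : ℂ`, `range (B + t • A) = range B` and
`ker (B + t • A) ≅ ker B`; in particular, if `dim ker B = κ < ∞` and the cokernel of
`B` is finite-dimensional, then each `B + t • A` has closed range, the same cokernel,
kernel of dimension `κ`, and the same Fredholm index as `B`. -/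
theorem range_and_kernel_of_perturbation_by_kernel_to_range_operator
    {E F : Type*}
    [NormedAddCommGroup E] [InnerProductSpace ℂ E] [CompleteSpace E]
    [NormedAddCommGroup F] [InnerProductSpace ℂ F] [CompleteSpace F]
    (B A : E →L[ℂ] F)
    (hA0 : ∀ x ∈ (LinearMap.ker (B : E →ₗ[ℂ] F))ᗮ, A x = 0)
    (hAB : LinearMap.range (A : E →ₗ[ℂ] F) ≤ LinearMap.range (B : E →ₗ[ℂ] F)) :
    ∀ t : ℂ,
      LinearMap.range ((B + t • A : E →L[ℂ] F) : E →ₗ[ℂ] F) = LinearMap.range (B : E →ₗ[ℂ] F) ∧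
      Nonempty ((LinearMap.ker ((B + t • A : E →L[ℂ] F) : E →ₗ[ℂ] F)) ≃ₗ[ℂ] (LinearMap.ker (B : E →ₗ[ℂ] F))) ∧
      (∀ κ : ℕ, finrank ℂ (LinearMap.ker (B : E →ₗ[ℂ] F)) = κ →
        FiniteDimensional ℂ (F ⧸ LinearMap.range (B : E →ₗ[ℂ] F)) →
          IsClosed ((LinearMap.range ((B + t • A : E →L[ℂ] F) : E →ₗ[ℂ] F) : Submodule ℂ F) : Set F) ∧
          Nonempty ((F ⧸ LinearMap.range ((B + t • A : E →L[ℂ] F) : E →ₗ[ℂ] F)) ≃ₗ[ℂ]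
            (F ⧸ LinearMap.range (B : E →ₗ[ℂ] F))) ∧
          finrank ℂ (LinearMap.ker ((B + t • A : E →L[ℂ] F) : E →ₗ[ℂ] F)) = κ ∧
          (finrank ℂ (LinearMap.ker ((B + t • A : E →L[ℂ] F) : E →ₗ[ℂ] F)) : ℤ)
              - (finrank ℂ (F ⧸ LinearMap.range ((B + t • A : E →L[ℂ] F) : E →ₗ[ℂ] F)) : ℤ)
            = (finrank ℂ (LinearMap.ker (B : E →ₗ[ℂ] F)) : ℤ)
              - (finrank ℂ (F ⧸ LinearMap.range (B : E →ₗ[ℂ] F)) : ℤ)) := by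
  intro t
  push_cast
  set K := LinearMap.ker (B : E →ₗ[ℂ] F)
  have hK : IsCompl K Kᗮ := K.isCompl_orthogonal
  have htAB : LinearMap.range (t • A : E →ₗ[ℂ] F) ≤ LinearMap.range (B : E →ₗ[ℂ] F) :=
    (LinearMap.range_smul_le_range _ t).trans hAB
  have htA0 : Kᗮ ≤ LinearMap.ker (t • A : E →ₗ[ℂ] F) := fun x hx ↦ by simp [hA0 x hx]
  have hrange := LinearMap.range_add_eq_of_isCompl_ker hK htAB htA0
  obtain ⟨eker⟩ := LinearMap.nonempty_ker_add_equiv_of_isCompl_ker hK htAB htA0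
  refine ⟨hrange, ⟨eker⟩, fun κ hκ _ ↦ ?_⟩
  have hfinrank := eker.finrank_eq.trans hκ
  let ecoker := Submodule.quotEquivOfEq _ _ hrange
  refine ⟨hrange ▸ B.isClosed_range_of_finiteDimensional_quotient, ⟨ecoker⟩, hfinrank, ?_⟩
  rw [hfinrank, hκ, ecoker.finrank_eq]
end
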